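/- Let 𝔤 be a 3-dimensional real Lie algebra with a nondegenerate symmetric bilinear form B, and suppose there exist a B-orthonormal basis (v₁,v₂,v₃) of 𝔤 (with ε_i := B(v_i,v_i) ∈ {±1}) and λ₁,λ₂,λ₃ ∈ ℝ such that [v₁,v₂] = ε₃λ₃v₃, [v₂,v₃] = ε₁λ₁v₁, [v₃,v₁] = ε₂λ₂v₂ (this holds precisely when 𝔤 is unimodular and the canonical operator L of (𝔤,B) is diagonalizable). If (J₊,J₋,X₊,X₋,H,F) is a B₃-Kähler datum on (𝔤,B), then H = 0, F = 0, and either 𝔤 is abelian, or there exist a B-orthonormal basis (w₁,w₂,w₃) of 𝔤 with B(w₂,w₂) = 1 and a real number λ ≠ 0 such that [w₁,w₂] = ε₃'λw₃, [w₂,w₃] = ε₁'λw₁, [w₃,w₁] = 0 (where ε_i' := B(w_i,w_i)), X₋ = w₂ and X₊ = ±w₂. -/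

import Mathlib

/-!
In a frame `v` as in the statement the bracket is `[x, y] = L (x × y)` with `L = diag λ`, and
Milnor's computation gives the Koszul form on the frame:
`κ(vᵢ, y, z) = (λ₀ + λ₁ + λ₂ - 2λᵢ) · vol(vᵢ, y, z)`. Writing `H = h · vol`, the condition on
`∇X₋` becomes `(λ₀ + λ₁ + λ₂ - 2λᵢ + h) · (vᵢ × X₋) = 0`, the condition on `∇X₊` computes
`J₊ ∘ F♯` on the frame, and `F(X₋, ·) = 0` forces `F = φ · vol(X₋, ·, ·)`.

After a cyclic relabelling, `X₋` has a non-zero `v₀`-coordinate, so `λ₁ = λ₂` and `h = -λ₀`.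
The identities `B(J₊y, y') + B(J₊y', y) = 0` and `B(J₊y, J₊y') = B(y, y') - B(y, X₊) B(y', X₊)`,
tested on `y = F♯vᵢ`, give `F = 0` in each of the cases `λ₀ = λ₁ = 0`, `λ₀ = λ₁ ≠ 0` and
`λ₀ ≠ λ₁`. Then `J₊ ∘ F♯ = 0`, so `X₊` satisfies the same kind of relations as `X₋`, with `h`
replaced by `-h`; as `X₊ ≠ 0` this forces `λ₀ = 0 = h`. Either `L = 0` or `X₋, X₊ ∈ ℝv₀`, and in
the latter case exchanging `v₀` and `v₁` gives the basis `w`.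
-/

open Module

theorem fin_three_cases (i : Fin 3) : i = 0 ∨ i = 1 ∨ i = 2 := by
  fin_cases i <;> simp

theorem LinearMap.BilinForm.apply_eq_sum_of_orthogonal {ι M : Type*} [Fintype ι]
    [AddCommGroup M] [Module ℝ M] {B : LinearMap.BilinForm ℝ M} {v : Basis ι ℝ M} {ε : ι → ℝ}
    (hortho : ∀ i j, i ≠ j → B (v i) (v j) = 0) (hdiag : ∀ i, B (v i) (v i) = ε i) (x y : M) :
    B x y = ∑ i, ε i * v.repr x i * v.repr y i := by
  classical
  rw [← B.sum_repr_mul_repr_mul v x y, Finsupp.sum_fintype _ _ (by simp)]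
  refine Finset.sum_congr rfl fun i _ => ?_
  rw [Finsupp.sum_fintype _ _ (by simp), Finset.sum_eq_single i
    (fun j _ hj => by rw [hortho i j hj.symm]; simp) (by simp), hdiag]
  simp only [smul_eq_mul]; ring

section ThreeDimensional

variable {M : Type*} [AddCommGroup M] [Module ℝ M] (v : Basis (Fin 3) ℝ M)

theorem Module.Basis.det_fin_three_apply (x y z : M) :
    v.det ![x, y, z] = v.repr x 0 * (v.repr y 1 * v.repr z 2 - v.repr y 2 * v.repr z 1)
      - v.repr x 1 * (v.repr y 0 * v.repr z 2 - v.repr y 2 * v.repr z 0)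
      + v.repr x 2 * (v.repr y 0 * v.repr z 1 - v.repr y 1 * v.repr z 0) := by
  rw [Basis.det_apply, Matrix.det_fin_three]
  simp [Basis.toMatrix_apply]
  ring

theorem Module.Basis.mul_repr_eq_zero_of_det {c : ℝ} {i j : Fin 3} {y : M}
    (h : ∀ z, c * v.det ![v i, y, z] = 0) (hij : i ≠ j) : c * v.repr y j = 0 := by
  have h0 := h (v 0); have h1 := h (v 1); have h2 := h (v 2)
  rcases fin_three_cases i with rfl | rfl | rfl <;>
    rcases fin_three_cases j with rfl | rfl | rfl <;>
    simp only [ne_eq, not_true_eq_false] at hij <;>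
    simp only [v.det_fin_three_apply, Basis.repr_self_apply, Fin.reduceEq, if_true, if_false,
      mul_one, mul_zero, sub_zero, zero_sub, add_zero] at h0 h1 h2 <;>
    linarith

theorem Module.Basis.exists_eq_smul_of_det_eq_zero {p q : M} (h : ∀ z, v.det ![p, q, z] = 0)
    (hq : v.repr q 0 ≠ 0) : ∃ t : ℝ, p = t • q := by
  refine ⟨v.repr p 0 / v.repr q 0, ?_⟩
  have h1 := h (v 1); have h2 := h (v 2)
  simp only [v.det_fin_three_apply, Basis.repr_self_apply, Fin.reduceEq, if_true, if_false,
    mul_one, mul_zero, sub_zero, zero_sub, add_zero] at h1 h2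
  refine v.repr.injective (Finsupp.ext fun k => ?_)
  fin_cases k <;> simp <;> field_simp <;> linarith

theorem Module.Basis.exists_swap_smul {s : ℝ} (hs : s ≠ 0) :
    ∃ w : Basis (Fin 3) ℝ M, ⇑w = ![v 1, s • v 0, v 2] :=
  ⟨(v.reindex (Equiv.swap 0 1)).unitsSMul ![1, Units.mk0 s hs, 1], by
    funext i
    fin_cases i <;> simp [Basis.unitsSMul_apply, Units.smul_def, Equiv.swap_apply_of_ne_of_ne]⟩

theorem AlternatingMap.fin_three_apply_eq_mul_det (H : M [⋀^Fin 3]→ₗ[ℝ] ℝ) (x y z : M) :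
    H ![x, y, z] = H v * v.det ![x, y, z] := by
  conv_lhs => rw [H.eq_smul_basis_det v]
  rfl

theorem AlternatingMap.fin_two_swap (F : M [⋀^Fin 2]→ₗ[ℝ] ℝ) (x y : M) :
    F ![y, x] = -F ![x, y] := by
  rw [← F.map_swap ![x, y] (i := 0) (j := 1) (by decide)]
  congr 1; funext t; fin_cases t <;> rfl

theorem AlternatingMap.eq_zero_of_fin_two_apply {F : M [⋀^Fin 2]→ₗ[ℝ] ℝ}
    (h : ∀ x y, F ![x, y] = 0) : F = 0 := by
  ext m
  have hm : m = ![m 0, m 1] := by funext t; fin_cases t <;> rfl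
  rw [hm, h, AlternatingMap.zero_apply]

theorem AlternatingMap.exists_fin_two_apply_eq_det (F : M [⋀^Fin 2]→ₗ[ℝ] ℝ) :
    ∃ U : M, ∀ x y, F ![x, y] = v.det ![U, x, y] := by
  set U := F ![v 1, v 2] • v 0 + F ![v 2, v 0] • v 1 + F ![v 0, v 1] • v 2
  refine ⟨U, fun x y => ?_⟩
  have hF : F = v.det.curryLeft U := by
    refine v.ext_alternating fun m _ => ?_
    have hm : (fun i => v (m i)) = ![v (m 0), v (m 1)] := by
      funext t; fin_cases t <;> rfl
    have hdiag : ∀ x, F ![x, x] = 0 := fun x =>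
      F.map_eq_zero_of_eq ![x, x] (i := 0) (j := 1) rfl (by decide)
    rw [hm, AlternatingMap.curryLeft_apply_apply, v.det_fin_three_apply]
    generalize m 0 = i; generalize m 1 = j
    fin_cases i <;> fin_cases j <;>
      simp [U, hdiag, F.fin_two_swap (v 1) (v 2), F.fin_two_swap (v 2) (v 0),
        F.fin_two_swap (v 0) (v 1)]
  rw [hF, AlternatingMap.curryLeft_apply_apply]

theorem AlternatingMap.exists_fin_two_apply_eq_mul_det {F : M [⋀^Fin 2]→ₗ[ℝ] ℝ} {X : M}
    (hFX : ∀ y, F ![X, y] = 0) (hX : v.repr X 0 ≠ 0) :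
    ∃ φ : ℝ, ∀ x y, F ![x, y] = φ * v.det ![X, x, y] := by
  obtain ⟨U, hU⟩ := F.exists_fin_two_apply_eq_det v
  obtain ⟨φ, rfl⟩ := v.exists_eq_smul_of_det_eq_zero (fun z => by rw [← hU]; exact hFX z) hX
  refine ⟨φ, fun x y => ?_⟩
  rw [hU, v.det_fin_three_apply, v.det_fin_three_apply]
  simp only [map_smul, Finsupp.smul_apply, smul_eq_mul]
  ring

end ThreeDimensional

section TwoForms

variable {ι M : Type*} [Fintype ι] [AddCommGroup M] [Module ℝ M]

theorem AlternatingMap.fin_two_apply_eq_sum (b : Basis ι ℝ M) (F : M [⋀^Fin 2]→ₗ[ℝ] ℝ)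
    (x y : M) : F ![x, y] = ∑ i, b.repr x i * F ![b i, y] := by
  let L : M →ₗ[ℝ] ℝ :=
    { toFun := fun x => F ![x, y]
      map_add' := fun x x' => F.toMultilinearMap.cons_add ![y] x x'
      map_smul' := fun c x => F.toMultilinearMap.cons_smul ![y] c x }
  change L x = ∑ i, b.repr x i * L (b i)
  conv_lhs => rw [← b.sum_repr x]
  rw [map_sum]; simp only [map_smul, smul_eq_mul]

/-- `J y = 0` forces `y ∈ ℝX`, so `F(x, y)` factors as `F(x, X) B(X, y)`; this vanishes at
`x = X`, hence by skew-symmetry everywhere. -/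
theorem AlternatingMap.eq_zero_of_comp_basis_eq_zero (b : Basis ι ℝ M)
    {B : LinearMap.BilinForm ℝ M} {J : M →ₗ[ℝ] M} {X : M} {F : M [⋀^Fin 2]→ₗ[ℝ] ℝ}
    {Fs : M → M} (hJ2 : ∀ x, J (J x) = -x + B x X • X) (hFs : ∀ x y, B (Fs x) y = F ![x, y])
    (hJF : ∀ i, J (Fs (b i)) = 0) : F = 0 := by
  have hfac : ∀ x y, F ![x, y] = F ![x, X] * B X y := by
    have hbasis : ∀ i y, F ![b i, y] = F ![b i, X] * B X y := by
      intro i y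
      have h := hJ2 (Fs (b i))
      rw [hJF, J.map_zero, eq_comm, neg_add_eq_zero] at h
      rw [← hFs, ← hFs]
      conv_lhs => rw [h]
      rw [LinearMap.map_smul₂, smul_eq_mul]
    intro x y
    rw [F.fin_two_apply_eq_sum b x y, F.fin_two_apply_eq_sum b x X, Finset.sum_mul]
    exact Finset.sum_congr rfl fun i _ => by rw [hbasis i y, mul_assoc]
  have hX : ∀ y, F ![X, y] = 0 := fun y => by
    rw [hfac, F.map_eq_zero_of_eq ![X, X] (i := 0) (j := 1) rfl (by decide), zero_mul]
  refine AlternatingMap.eq_zero_of_fin_two_apply fun x y => ?_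
  rw [hfac, ← neg_neg (F ![x, X]), ← F.fin_two_swap, hX, neg_zero, zero_mul]

end TwoForms

section Frame

variable {𝔤 : Type*} [LieRing 𝔤] [LieAlgebra ℝ 𝔤]

/-- An orthonormal basis with `B (v i) (v i) = ε i = ±1` in which the bracket is
`[x, y] = L (x × y)` for `L = diag (lam 0, lam 1, lam 2)`. -/
structure IsDiagonalFrame (B : LinearMap.BilinForm ℝ 𝔤) (v : Basis (Fin 3) ℝ 𝔤)
    (ε lam : Fin 3 → ℝ) : Prop where
  sign : ∀ i, ε i = 1 ∨ ε i = -1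
  ortho : ∀ i j, i ≠ j → B (v i) (v j) = 0
  diag : ∀ i, B (v i) (v i) = ε i
  lie01 : ⁅v 0, v 1⁆ = (ε 2 * lam 2) • v 2
  lie12 : ⁅v 1, v 2⁆ = (ε 0 * lam 0) • v 0
  lie20 : ⁅v 2, v 0⁆ = (ε 1 * lam 1) • v 1

/-- `2 B(∇ₓ y, z)` for the Levi-Civita product `∇`. -/
def koszulForm (B : LinearMap.BilinForm ℝ 𝔤) (x y z : 𝔤) : ℝ :=
  B ⁅x, y⁆ z - B ⁅y, z⁆ x + B ⁅z, x⁆ y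

namespace IsDiagonalFrame

variable {B : LinearMap.BilinForm ℝ 𝔤} {v : Basis (Fin 3) ℝ 𝔤} {ε lam : Fin 3 → ℝ}
  (hv : IsDiagonalFrame B v ε lam)
include hv

theorem sign_mul_self (i : Fin 3) : ε i * ε i = 1 := by
  rcases hv.sign i with h | h <;> rw [h] <;> norm_num

theorem sign_ne_zero (i : Fin 3) : ε i ≠ 0 := by
  rcases hv.sign i with h | h <;> rw [h] <;> norm_num

theorem apply_eq (x y : 𝔤) :
    B x y = ε 0 * v.repr x 0 * v.repr y 0 + ε 1 * v.repr x 1 * v.repr y 1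
      + ε 2 * v.repr x 2 * v.repr y 2 := by
  rw [B.apply_eq_sum_of_orthogonal hv.ortho hv.diag, Fin.sum_univ_three]

theorem apply_basis_left (i : Fin 3) (x : 𝔤) : B (v i) x = ε i * v.repr x i := by
  rw [hv.apply_eq]; fin_cases i <;> simp

theorem apply_basis_right (x : 𝔤) (i : Fin 3) : B x (v i) = ε i * v.repr x i := by
  rw [hv.apply_eq]; fin_cases i <;> simp

theorem apply_eq_sum_apply_basis (x y : 𝔤) :
    B x y = ∑ k, ε k * B x (v k) * B y (v k) := by
  simp only [Fin.sum_univ_three, hv.apply_basis_right, hv.apply_eq x y]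
  linear_combination (-(ε 0 * v.repr x 0 * v.repr y 0)) * hv.sign_mul_self 0
    - (ε 1 * v.repr x 1 * v.repr y 1) * hv.sign_mul_self 1
    - (ε 2 * v.repr x 2 * v.repr y 2) * hv.sign_mul_self 2

theorem eq_zero_of_mul_repr_eq_zero {X : 𝔤} (hX : B X X = 1) {c : ℝ}
    (h0 : c * v.repr X 0 = 0) (h1 : c * v.repr X 1 = 0) (h2 : c * v.repr X 2 = 0) : c = 0 := by
  by_contra hc
  rw [hv.apply_eq, (mul_eq_zero.mp h0).resolve_left hc, (mul_eq_zero.mp h1).resolve_left hc,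
    (mul_eq_zero.mp h2).resolve_left hc] at hX
  simp at hX

theorem sign_zero_eq_one_of_repr_eq_zero {X : 𝔤} (hX : B X X = 1) (h1 : v.repr X 1 = 0)
    (h2 : v.repr X 2 = 0) : ε 0 = 1 ∧ v.repr X 0 ^ 2 = 1 := by
  rw [hv.apply_eq, h1, h2] at hX
  have hε0 : ε 0 = 1 := (hv.sign 0).resolve_right fun h => by
    rw [h] at hX; nlinarith [sq_nonneg (v.repr X 0)]
  exact ⟨hε0, by rw [hε0] at hX; linear_combination hX⟩

theorem lie_apply (x y z : 𝔤) :
    B ⁅x, y⁆ z = lam 0 * (v.repr x 1 * v.repr y 2 - v.repr x 2 * v.repr y 1) * v.repr z 0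
      + lam 1 * (v.repr x 2 * v.repr y 0 - v.repr x 0 * v.repr y 2) * v.repr z 1
      + lam 2 * (v.repr x 0 * v.repr y 1 - v.repr x 1 * v.repr y 0) * v.repr z 2 := by
  have lie10 : ⁅v 1, v 0⁆ = -((ε 2 * lam 2) • v 2) := by rw [← lie_skew, hv.lie01]
  have lie21 : ⁅v 2, v 1⁆ = -((ε 0 * lam 0) • v 0) := by rw [← lie_skew, hv.lie12]
  have lie02 : ⁅v 0, v 2⁆ = -((ε 1 * lam 1) • v 1) := by rw [← lie_skew, hv.lie20]
  conv_lhs => rw [← v.sum_repr x, ← v.sum_repr y]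
  simp only [Fin.sum_univ_three, lie_add, add_lie, lie_smul, smul_lie, lie_self, hv.lie01,
    hv.lie12, hv.lie20, lie10, lie21, lie02, smul_zero, smul_neg, map_add, map_smul, map_neg,
    map_zero, LinearMap.add_apply, LinearMap.smul_apply, LinearMap.neg_apply,
    LinearMap.zero_apply, hv.apply_basis_left, smul_eq_mul]
  linear_combination
    (lam 0 * (v.repr x 1 * v.repr y 2 - v.repr x 2 * v.repr y 1) * v.repr z 0) * hv.sign_mul_self 0
    + (lam 1 * (v.repr x 2 * v.repr y 0 - v.repr x 0 * v.repr y 2) * v.repr z 1)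
      * hv.sign_mul_self 1
    + (lam 2 * (v.repr x 0 * v.repr y 1 - v.repr x 1 * v.repr y 0) * v.repr z 2)
      * hv.sign_mul_self 2

theorem koszulForm_basis_left (i : Fin 3) (y z : 𝔤) :
    koszulForm B (v i) y z = (lam 0 + lam 1 + lam 2 - 2 * lam i) * v.det ![v i, y, z] := by
  simp only [koszulForm, hv.lie_apply, v.det_fin_three_apply]
  fin_cases i <;> simp <;> ring

theorem lie_eq_zero (hBnd : ∀ x, (∀ y, B x y = 0) → x = 0) (hlam : ∀ i, lam i = 0) (x y : 𝔤) :
    ⁅x, y⁆ = 0 :=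
  hBnd _ fun z => by simp [hv.lie_apply, hlam]

theorem rotate :
    IsDiagonalFrame B (v.reindex (finRotate 3).symm) (ε ∘ finRotate 3) (lam ∘ finRotate 3) := by
  have h0 : finRotate 3 0 = 1 := by decide
  have h1 : finRotate 3 1 = 2 := by decide
  have h2 : finRotate 3 2 = 0 := by decide
  exact
    { sign := fun i => hv.sign _
      ortho := fun i j hij => by simpa using hv.ortho _ _ ((finRotate 3).injective.ne hij)
      diag := fun i => by simp [hv.diag]
      lie01 := by simpa [h0, h1, h2] using hv.lie12
      lie12 := by simpa [h0, h1, h2] using hv.lie20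
      lie20 := by simpa [h0, h1, h2] using hv.lie01 }

theorem swap {w : Basis (Fin 3) ℝ 𝔤} {s : ℝ} (hs : s ^ 2 = 1)
    (hw : ⇑w = ![v 1, s • v 0, v 2]) :
    IsDiagonalFrame B w (ε ∘ Equiv.swap 0 1) (fun i => -s * lam (Equiv.swap 0 1 i)) := by
  have hsw : Equiv.swap (0 : Fin 3) 1 2 = 2 := by decide
  have lie10 : ⁅v 1, v 0⁆ = -((ε 2 * lam 2) • v 2) := by rw [← lie_skew, hv.lie01]
  have lie21 : ⁅v 2, v 1⁆ = -((ε 0 * lam 0) • v 0) := by rw [← lie_skew, hv.lie12]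
  have lie02 : ⁅v 0, v 2⁆ = -((ε 1 * lam 1) • v 1) := by rw [← lie_skew, hv.lie20]
  constructor
  · intro i; exact hv.sign _
  · intro i j hij
    rw [hw]
    fin_cases i <;> fin_cases j <;> simp at hij ⊢ <;> simp [hv.ortho]
  · intro i
    rw [hw]
    fin_cases i <;> simp [hv.diag, hsw]
    linear_combination ε 0 * hs
  · simp [hw, lie10, hsw, smul_smul]; ring_nf
  · simp [hw, lie02, smul_smul]; ring_nf
  · simp [hw, lie21, smul_smul]
    congr 1; linear_combination -(ε 0 * lam 0) * hs

section Skew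

variable {Jp : 𝔤 →ₗ[ℝ] 𝔤} (hJpskew : ∀ x y, B (Jp x) y = - B x (Jp y))
include hJpskew

theorem sum_skew_eq_zero (hBsymm : ∀ x y, B x y = B y x) (y y' : 𝔤) :
    ∑ k, ε k * (B (Jp y) (v k) * B y' (v k) + B (Jp y') (v k) * B y (v k)) = 0 := by
  have h : B (Jp y) y' + B (Jp y') y = 0 := by rw [hJpskew y, hBsymm y]; ring
  rw [hv.apply_eq_sum_apply_basis (Jp y), hv.apply_eq_sum_apply_basis (Jp y'),
    ← Finset.sum_add_distrib] at h
  simpa only [mul_add, mul_assoc] using h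

theorem sum_skew_mul_skew_eq {Xp : 𝔤} (hJp2 : ∀ x, Jp (Jp x) = -x + B x Xp • Xp) (y y' : 𝔤) :
    ∑ k, ε k * (B (Jp y) (v k) * B (Jp y') (v k))
      = ∑ k, ε k * (B y (v k) * B y' (v k)) - B y Xp * B y' Xp := by
  have h : B (Jp y) (Jp y') = B y y' - B y Xp * B y' Xp := by
    rw [hJpskew, hJp2, map_add, map_neg, map_smul, smul_eq_mul]; ring
  rw [hv.apply_eq_sum_apply_basis (Jp y), hv.apply_eq_sum_apply_basis y] at h
  simpa only [mul_assoc] using h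

end Skew

section Datum

variable {Jp : 𝔤 →ₗ[ℝ] 𝔤} {Xp Xm : 𝔤} {Fs : 𝔤 → 𝔤} {φ : ℝ}
  (hBsymm : ∀ x y, B x y = B y x) (hJpskew : ∀ x y, B (Jp x) y = - B x (Jp y))
  (hXp : B Xp Xp = 1) (hF : ∀ x y, B (Fs x) y = φ * v.det ![Xm, x, y])
include hBsymm hJpskew hXp hF

/-- The case `λ₀ = λ₁ = λ₂ ≠ 0`. If `φ ≠ 0`, skew-symmetry of `J₊` on the vectors `F♯vᵢ` already
forces `X₊ = 0`. -/
theorem coeff_eq_zero_of_comp_eq_smul_det {ν : ℝ}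
    (hT : ∀ i z, B (Jp (Fs (v i))) z = ν * v.det ![v i, Xp, z])
    (ha0 : v.repr Xm 0 ≠ 0) (hν : ν ≠ 0) : φ = 0 := by
  by_contra hφ
  have cancel : ∀ e : ℝ, ν * φ * e = 0 → e = 0 := fun e he =>
    (mul_eq_zero.mp he).resolve_left (mul_ne_zero hν hφ)
  have e00 := hv.sum_skew_eq_zero hJpskew hBsymm (Fs (v 0)) (Fs (v 0))
  have e11 := hv.sum_skew_eq_zero hJpskew hBsymm (Fs (v 1)) (Fs (v 1))
  have e22 := hv.sum_skew_eq_zero hJpskew hBsymm (Fs (v 2)) (Fs (v 2))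
  have e01 := hv.sum_skew_eq_zero hJpskew hBsymm (Fs (v 0)) (Fs (v 1))
  have e02 := hv.sum_skew_eq_zero hJpskew hBsymm (Fs (v 0)) (Fs (v 2))
  simp only [Fin.sum_univ_three, hF, hT, v.det_fin_three_apply, Basis.repr_self_apply,
    Fin.reduceEq, if_true, if_false, mul_one, mul_zero, zero_mul, sub_zero, zero_sub, add_zero,
    zero_add] at e00 e11 e22 e01 e02
  ring_nf at e00 e11 e22 e01 e02
  set a := v.repr Xm
  set b := v.repr Xp
  have h00 : ε 1 * (b 2 * a 2) + ε 2 * (b 1 * a 1) = 0 :=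
    cancel _ (by linear_combination -e00 / 2)
  have h11 : ε 0 * (b 2 * a 2) + ε 2 * (b 0 * a 0) = 0 :=
    cancel _ (by linear_combination -e11 / 2)
  have h22 : ε 1 * (b 0 * a 0) + ε 0 * (b 1 * a 1) = 0 :=
    cancel _ (by linear_combination -e22 / 2)
  have hb0 : b 0 = 0 := by
    refine (mul_eq_zero.mp ?_).resolve_right ha0
    rcases hv.sign 0 with s0 | s0 <;> rcases hv.sign 1 with s1 | s1 <;>
      rcases hv.sign 2 with s2 | s2 <;> simp only [s0, s1, s2] at h00 h11 h22 <;> linarith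
  have hb1 : b 1 = 0 := by
    have h01 : ε 2 * (b 1 * a 0) = 0 :=
      cancel _ (by linear_combination e01 - ν * φ * ε 2 * a 1 * hb0)
    simpa [hv.sign_ne_zero, ha0] using h01
  have hb2 : b 2 = 0 := by
    have h02 : ε 1 * (b 2 * a 0) = 0 :=
      cancel _ (by linear_combination e02 - ε 1 * ν * φ * a 2 * hb0)
    simpa [hv.sign_ne_zero, ha0] using h02
  rw [hv.apply_eq, hb0, hb1, hb2] at hXp
  simp at hXp

/-- The case `λ₀ ≠ λ₁`, in which `X₋ ∈ ℝv₀`. -/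
theorem coeff_eq_zero_of_comp_eq_mul_det {c : Fin 3 → ℝ}
    (hJp2 : ∀ x, Jp (Jp x) = -x + B x Xp • Xp) (hXm : B Xm Xm = 1)
    (hT : ∀ i z, B (Jp (Fs (v i))) z = c i * v.det ![v i, Xp, z])
    (ha1 : v.repr Xm 1 = 0) (ha2 : v.repr Xm 2 = 0) (hc12 : c 1 = c 2) (hc01 : c 0 ≠ c 1) :
    φ = 0 := by
  obtain ⟨hε0, ha0⟩ := hv.sign_zero_eq_one_of_repr_eq_zero hXm ha1 ha2
  rw [hv.apply_eq, hε0] at hXp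
  by_contra hφ
  set u := φ * v.repr Xm 0
  have hu : u ≠ 0 := mul_ne_zero hφ fun h => by simp [h] at ha0
  have e11 := hv.sum_skew_eq_zero hJpskew hBsymm (Fs (v 1)) (Fs (v 1))
  have e01 := hv.sum_skew_eq_zero hJpskew hBsymm (Fs (v 0)) (Fs (v 1))
  have e02 := hv.sum_skew_eq_zero hJpskew hBsymm (Fs (v 0)) (Fs (v 2))
  have f11 := hv.sum_skew_mul_skew_eq hJpskew hJp2 (Fs (v 1)) (Fs (v 1))
  have f22 := hv.sum_skew_mul_skew_eq hJpskew hJp2 (Fs (v 2)) (Fs (v 2))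
  have f12 := hv.sum_skew_mul_skew_eq hJpskew hJp2 (Fs (v 1)) (Fs (v 2))
  simp only [Fin.sum_univ_three, hF, hT, v.det_fin_three_apply, Basis.repr_self_apply,
    Fin.reduceEq, if_true, if_false, mul_one, mul_zero, zero_mul, sub_zero, zero_sub, add_zero,
    zero_add, ha1, ha2, hε0, ← hc12] at e11 e01 e02 f11 f22 f12
  ring_nf at e11 e01 e02 f11 f22 f12
  set b := v.repr Xp
  have cancel : ∀ e : ℝ, φ * v.repr Xm 0 * e = 0 → e = 0 := fun e he =>
    (mul_eq_zero.mp he).resolve_left hu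
  have hb0 : c 1 * b 0 = 0 := by
    have h := cancel (ε 2 * (c 1 * b 0)) (by linear_combination -e11 / 2)
    simpa [hv.sign_ne_zero] using h
  by_cases hc0 : c 0 = 0
  · have hc1 : c 1 ≠ 0 := fun h => hc01 (hc0.trans h.symm)
    replace hb0 : b 0 = 0 := (mul_eq_zero.mp hb0).resolve_left hc1
    have hb12 : b 1 * b 2 = 0 := by
      have h : (c 1 ^ 2 + u ^ 2) * (b 1 * b 2) = 0 := by linear_combination -f12
      exact (mul_eq_zero.mp h).resolve_left (by positivity)
    refine hc1 (pow_eq_zero_iff two_ne_zero |>.mp ?_)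
    rcases mul_eq_zero.mp hb12 with hb1 | hb2
    · have hn : ε 2 * b 2 ^ 2 = 1 := by rw [hb0, hb1] at hXp; linear_combination hXp
      rw [hb0] at f11
      linear_combination ε 2 * f11 + u ^ 2 * hv.sign_mul_self 2 - (u ^ 2 + c 1 ^ 2) * hn
    · have hn : ε 1 * b 1 ^ 2 = 1 := by rw [hb0, hb2] at hXp; linear_combination hXp
      rw [hb0] at f22
      linear_combination ε 1 * f22 + u ^ 2 * hv.sign_mul_self 1 - (u ^ 2 + c 1 ^ 2) * hn
  · have hb1 : b 1 = 0 := by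
      have h := cancel (ε 2 * (c 0 * b 1)) (by linear_combination e01)
      simpa [hv.sign_ne_zero, hc0] using h
    have hb2 : b 2 = 0 := by
      have h := cancel (ε 1 * (c 0 * b 2)) (by linear_combination e02)
      simpa [hv.sign_ne_zero, hc0] using h
    have hb0' : b 0 ^ 2 = 1 := by rw [hb1, hb2] at hXp; linear_combination hXp
    have hc1 : c 1 = 0 := (mul_eq_zero.mp hb0).resolve_right fun h => by simp [h] at hb0'
    refine hu (pow_eq_zero_iff two_ne_zero |>.mp ?_)
    rw [hc1, hb2] at f11
    linear_combination -ε 2 * f11 - u ^ 2 * hv.sign_mul_self 2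

end Datum

theorem mul_repr_eq_zero_of_koszulForm {H : 𝔤 [⋀^Fin 3]→ₗ[ℝ] ℝ} {X : 𝔤}
    (hX : ∀ x z, koszulForm B x X z = -H ![x, X, z]) {i j : Fin 3} (hij : i ≠ j) :
    (lam 0 + lam 1 + lam 2 - 2 * lam i + H v) * v.repr X j = 0 :=
  v.mul_repr_eq_zero_of_det (fun z => by
    have h := hX (v i) z
    rw [hv.koszulForm_basis_left, H.fin_three_apply_eq_mul_det v] at h
    linear_combination h) hij

theorem apply_comp_basis_eq {H : 𝔤 [⋀^Fin 3]→ₗ[ℝ] ℝ} {Jp : 𝔤 →ₗ[ℝ] 𝔤} {Fs : 𝔤 → 𝔤} {X : 𝔤}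
    (hX : ∀ x z, koszulForm B x X z = -H ![X, x, z] - 2 * B (Jp (Fs x)) z) (i : Fin 3) (z : 𝔤) :
    B (Jp (Fs (v i))) z
      = (H v - (lam 0 + lam 1 + lam 2 - 2 * lam i)) / 2 * v.det ![v i, X, z] := by
  have h := hX (v i) z
  rw [hv.koszulForm_basis_left, H.fin_three_apply_eq_mul_det v, v.det_fin_three_apply,
    v.det_fin_three_apply] at h
  rw [v.det_fin_three_apply]
  linear_combination h / 2

theorem twoForm_eq_zero (hBsymm : ∀ x y, B x y = B y x) (hBnd : ∀ x, (∀ y, B x y = 0) → x = 0)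
    {Jp : 𝔤 →ₗ[ℝ] 𝔤} {Xp Xm : 𝔤} (hJpskew : ∀ x y, B (Jp x) y = - B x (Jp y))
    (hJp2 : ∀ x, Jp (Jp x) = -x + B x Xp • Xp) (hXp : B Xp Xp = 1) (hXm : B Xm Xm = 1)
    {F : 𝔤 [⋀^Fin 2]→ₗ[ℝ] ℝ} (hFXm : ∀ y, F ![Xm, y] = 0)
    {Fs : 𝔤 → 𝔤} (hFs : ∀ x y, B (Fs x) y = F ![x, y]) {h : ℝ}
    (hm : ∀ i j, i ≠ j → (lam 0 + lam 1 + lam 2 - 2 * lam i + h) * v.repr Xm j = 0)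
    (hT : ∀ i z, B (Jp (Fs (v i))) z
      = (h - (lam 0 + lam 1 + lam 2 - 2 * lam i)) / 2 * v.det ![v i, Xp, z])
    (hl12 : lam 1 = lam 2) (hh : h = -lam 0) (ha0 : v.repr Xm 0 ≠ 0) : F = 0 := by
  obtain ⟨φ, hφ⟩ := F.exists_fin_two_apply_eq_mul_det v hFXm ha0
  have hF : ∀ x y, B (Fs x) y = φ * v.det ![Xm, x, y] := fun x y => (hFs x y).trans (hφ x y)
  have of_coeff : φ = 0 → F = 0 := fun h0 =>
    AlternatingMap.eq_zero_of_fin_two_apply fun x y => by rw [hφ, h0, zero_mul]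
  subst hh
  rcases eq_or_ne (lam 1) (lam 0) with hl10 | hl10
  · have hT' : ∀ i z, B (Jp (Fs (v i))) z = -lam 0 * v.det ![v i, Xp, z] := fun i z => by
      rw [hT]; fin_cases i <;> simp [← hl12, hl10] <;> ring
    rcases eq_or_ne (lam 0) 0 with hl0 | hl0
    · exact F.eq_zero_of_comp_basis_eq_zero v hJp2 hFs fun i =>
        hBnd _ fun z => by rw [hT', hl0, neg_zero, zero_mul]
    · exact of_coeff <| hv.coeff_eq_zero_of_comp_eq_smul_det hBsymm hJpskew hXp hF hT' ha0
        (neg_ne_zero.mpr hl0)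
  · have hl : lam 0 + lam 1 + lam 2 - 2 * lam 0 + -lam 0 ≠ 0 := fun h => hl10 (by linarith)
    refine of_coeff <| hv.coeff_eq_zero_of_comp_eq_mul_det hBsymm hJpskew hXp hF hJp2 hXm hT
      ((mul_eq_zero.mp (hm 0 1 (by decide))).resolve_left hl)
      ((mul_eq_zero.mp (hm 0 2 (by decide))).resolve_left hl)
      (by simp [hl12]) (fun h => hl10 ?_)
    simp [← hl12] at h; linarith

theorem exists_basis_of_repr_eq_zero (hl0 : lam 0 = 0) (hl12 : lam 1 = lam 2) (hl1 : lam 1 ≠ 0)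
    {Xp Xm : 𝔤} (hXp : B Xp Xp = 1) (hXm : B Xm Xm = 1) (hp1 : v.repr Xp 1 = 0)
    (hp2 : v.repr Xp 2 = 0) (hm1 : v.repr Xm 1 = 0) (hm2 : v.repr Xm 2 = 0) :
    ∃ (w : Module.Basis (Fin 3) ℝ 𝔤) (l : ℝ), l ≠ 0 ∧
      (∀ i j, i ≠ j → B (w i) (w j) = 0) ∧
      (∀ i, B (w i) (w i) = 1 ∨ B (w i) (w i) = -1) ∧
      B (w 1) (w 1) = 1 ∧
      ⁅w 0, w 1⁆ = (B (w 2) (w 2) * l) • w 2 ∧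
      ⁅w 1, w 2⁆ = (B (w 0) (w 0) * l) • w 0 ∧
      ⁅w 2, w 0⁆ = 0 ∧
      Xm = w 1 ∧ (Xp = w 1 ∨ Xp = -w 1) := by
  have coord : ∀ {X : 𝔤}, v.repr X 1 = 0 → v.repr X 2 = 0 → X = v.repr X 0 • v 0 := by
    intro X h1 h2
    conv_lhs => rw [← v.sum_repr X, Fin.sum_univ_three, h1, h2]
    simp only [zero_smul, add_zero]
  obtain ⟨hε0, na⟩ := hv.sign_zero_eq_one_of_repr_eq_zero hXm hm1 hm2
  obtain ⟨-, nb⟩ := hv.sign_zero_eq_one_of_repr_eq_zero hXp hp1 hp2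
  have ha0 : v.repr Xm 0 ≠ 0 := fun h => by simp [h] at na
  obtain ⟨w, hw⟩ := v.exists_swap_smul ha0
  have hwf := hv.swap na hw
  have hw1 : w 1 = v.repr Xm 0 • v 0 := by rw [hw]; rfl
  refine ⟨w, -v.repr Xm 0 * lam 1, mul_ne_zero (neg_ne_zero.mpr ha0) hl1, hwf.ortho,
    fun i => by rw [hwf.diag]; exact hwf.sign i, by rw [hwf.diag]; simpa using hε0, ?_, ?_, ?_,
    hw1 ▸ coord hm1 hm2, ?_⟩
  · rw [hwf.lie01, hwf.diag]; simp [show Equiv.swap (0 : Fin 3) 1 2 = 2 by decide, hl12]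
  · rw [hwf.lie12, hwf.diag]; simp
  · rw [hwf.lie20]; simp [hl0]
  · have h : (v.repr Xp 0 - v.repr Xm 0) * (v.repr Xp 0 + v.repr Xm 0) = 0 := by
      linear_combination nb - na
    rw [coord hp1 hp2, hw1]
    rcases mul_eq_zero.mp h with h | h
    · left; rw [sub_eq_zero.mp h]
    · right; rw [eq_neg_of_add_eq_zero_left h, neg_smul]

theorem classification_of_repr_ne_zero (hBsymm : ∀ x y, B x y = B y x)
    (hBnd : ∀ x, (∀ y, B x y = 0) → x = 0)
    {Jp : 𝔤 →ₗ[ℝ] 𝔤} {Xp Xm : 𝔤} (hJpskew : ∀ x y, B (Jp x) y = - B x (Jp y))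
    (hJp2 : ∀ x, Jp (Jp x) = -x + B x Xp • Xp) (hXp : B Xp Xp = 1) (hXm : B Xm Xm = 1)
    {H : 𝔤 [⋀^Fin 3]→ₗ[ℝ] ℝ} {F : 𝔤 [⋀^Fin 2]→ₗ[ℝ] ℝ} (hFXm : ∀ y, F ![Xm, y] = 0)
    {Fs : 𝔤 → 𝔤} (hFs : ∀ x y, B (Fs x) y = F ![x, y])
    (hxm : ∀ x z, koszulForm B x Xm z = -H ![x, Xm, z])
    (hxp : ∀ x z, koszulForm B x Xp z = -H ![Xp, x, z] - 2 * B (Jp (Fs x)) z)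
    (ha0 : v.repr Xm 0 ≠ 0) :
    H = 0 ∧ F = 0 ∧
    ((∀ x y : 𝔤, ⁅x, y⁆ = 0) ∨
      ∃ (w : Module.Basis (Fin 3) ℝ 𝔤) (l : ℝ), l ≠ 0 ∧
        (∀ i j, i ≠ j → B (w i) (w j) = 0) ∧
        (∀ i, B (w i) (w i) = 1 ∨ B (w i) (w i) = -1) ∧
        B (w 1) (w 1) = 1 ∧
        ⁅w 0, w 1⁆ = (B (w 2) (w 2) * l) • w 2 ∧
        ⁅w 1, w 2⁆ = (B (w 0) (w 0) * l) • w 0 ∧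
        ⁅w 2, w 0⁆ = 0 ∧
        Xm = w 1 ∧ (Xp = w 1 ∨ Xp = -w 1)) := by
  have hm := fun i j (hij : i ≠ j) => hv.mul_repr_eq_zero_of_koszulForm hxm hij
  have hT := hv.apply_comp_basis_eq hxp
  have hl12 : lam 1 = lam 2 := by
    have h1 := (mul_eq_zero.mp (hm 1 0 (by decide))).resolve_right ha0
    have h2 := (mul_eq_zero.mp (hm 2 0 (by decide))).resolve_right ha0
    linarith
  have hh : H v = -lam 0 := by
    have h1 := (mul_eq_zero.mp (hm 1 0 (by decide))).resolve_right ha0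
    linarith
  have hF0 := hv.twoForm_eq_zero hBsymm hBnd hJpskew hJp2 hXp hXm hFXm hFs hm hT hl12 hh ha0
  have hp : ∀ i j, i ≠ j →
      (H v - (lam 0 + lam 1 + lam 2 - 2 * lam i)) / 2 * v.repr Xp j = 0 := fun i j hij =>
    v.mul_repr_eq_zero_of_det (fun z => by rw [← hT, hJpskew, hFs, hF0]; simp) hij
  have hc1 : (H v - (lam 0 + lam 1 + lam 2 - 2 * lam 1)) / 2 = -lam 0 := by
    rw [hh, ← hl12]; ring
  have hc2 : (H v - (lam 0 + lam 1 + lam 2 - 2 * lam 2)) / 2 = -lam 0 := by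
    rw [hh, ← hl12]; ring
  have hl0 : lam 0 = 0 := neg_eq_zero.mp <| hv.eq_zero_of_mul_repr_eq_zero hXp
    (hc1 ▸ hp 1 0 (by decide)) (hc2 ▸ hp 2 1 (by decide)) (hc1 ▸ hp 1 2 (by decide))
  refine ⟨by rw [H.eq_smul_basis_det v, hh, hl0, neg_zero, zero_smul], hF0, ?_⟩
  by_cases hl1 : lam 1 = 0
  · left
    exact hv.lie_eq_zero hBnd fun i => by fin_cases i <;> simp [hl0, hl1, ← hl12]
  right
  have hcm : ∀ j, j ≠ 0 → v.repr Xm j = 0 := fun j hj =>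
    (mul_eq_zero.mp (hm 0 j hj.symm)).resolve_left (by
      rw [hh, hl0, ← hl12]; exact fun h => hl1 (by linarith))
  have hcp : ∀ j, j ≠ 0 → v.repr Xp j = 0 := fun j hj =>
    (mul_eq_zero.mp (hp 0 j hj.symm)).resolve_left (by
      rw [hh, hl0, ← hl12]; exact fun h => hl1 (by linarith))
  exact hv.exists_basis_of_repr_eq_zero hl0 hl12 hl1 hXp hXm (hcp 1 (by decide))
    (hcp 2 (by decide)) (hcm 1 (by decide)) (hcm 2 (by decide))

end IsDiagonalFrame

end Frame

theorem stmt_8 {𝔤 : Type*} [LieRing 𝔤] [LieAlgebra ℝ 𝔤]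
    (B : LinearMap.BilinForm ℝ 𝔤)
    (hBsymm : ∀ x y, B x y = B y x)
    (hBnd : ∀ x, (∀ y, B x y = 0) → x = 0)
    -- unimodular with diagonalizable canonical operator: orthonormal basis
    (v : Module.Basis (Fin 3) ℝ 𝔤) (ε lam : Fin 3 → ℝ)
    (hε : ∀ i, ε i = 1 ∨ ε i = -1)
    (hortho : ∀ i j, i ≠ j → B (v i) (v j) = 0)
    (hdiag : ∀ i, B (v i) (v i) = ε i)
    (hb01 : ⁅v 0, v 1⁆ = (ε 2 * lam 2) • v 2)
    (hb12 : ⁅v 1, v 2⁆ = (ε 0 * lam 0) • v 0)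
    (hb20 : ⁅v 2, v 0⁆ = (ε 1 * lam 1) • v 1)
    -- Levi-Civita product
    (N : 𝔤 → 𝔤 → 𝔤)
    (hK : ∀ x y z, 2 * B (N x y) z = B ⁅x, y⁆ z - B ⁅y, z⁆ x + B ⁅z, x⁆ y)
    -- B₃-Kähler datum
    (Jp : 𝔤 →ₗ[ℝ] 𝔤) (Xp Xm : 𝔤)
    (hJpskew : ∀ x y, B (Jp x) y = - B x (Jp y))
    (hXp : B Xp Xp = 1) (hXm : B Xm Xm = 1)
    (hJp2 : ∀ x, Jp (Jp x) = -x + B x Xp • Xp)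
    (H : AlternatingMap ℝ 𝔤 ℝ (Fin 3)) (F : AlternatingMap ℝ 𝔤 ℝ (Fin 2))
    (hFXm : ∀ y : 𝔤, F ![Xm, y] = 0)
    (Hs : 𝔤 → 𝔤 → 𝔤) (hHs : ∀ x y z, B (Hs x y) z = H ![x, y, z])
    (Fs : 𝔤 → 𝔤) (hFs : ∀ x y, B (Fs x) y = F ![x, y])
    (hNXm : ∀ x, N x Xm = (-(1 / 2 : ℝ)) • Hs x Xm)
    (hNXp : ∀ x, N x Xp = (-(1 / 2 : ℝ)) • Hs Xp x - Jp (Fs x)) :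
    H = 0 ∧ F = 0 ∧
    ((∀ x y : 𝔤, ⁅x, y⁆ = 0) ∨
      ∃ (w : Module.Basis (Fin 3) ℝ 𝔤) (l : ℝ), l ≠ 0 ∧
        (∀ i j, i ≠ j → B (w i) (w j) = 0) ∧
        (∀ i, B (w i) (w i) = 1 ∨ B (w i) (w i) = -1) ∧
        B (w 1) (w 1) = 1 ∧
        ⁅w 0, w 1⁆ = (B (w 2) (w 2) * l) • w 2 ∧
        ⁅w 1, w 2⁆ = (B (w 0) (w 0) * l) • w 0 ∧
        ⁅w 2, w 0⁆ = 0 ∧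
        Xm = w 1 ∧ (Xp = w 1 ∨ Xp = -w 1)) := by
  have hv : IsDiagonalFrame B v ε lam := ⟨hε, hortho, hdiag, hb01, hb12, hb20⟩
  have hxm : ∀ x z, koszulForm B x Xm z = -H ![x, Xm, z] := fun x z => by
    rw [koszulForm, ← hK, hNXm, map_smul, LinearMap.smul_apply, hHs, smul_eq_mul]; ring
  have hxp : ∀ x z, koszulForm B x Xp z = -H ![Xp, x, z] - 2 * B (Jp (Fs x)) z := fun x z => by
    rw [koszulForm, ← hK, hNXp, map_sub, map_smul, LinearMap.sub_apply, LinearMap.smul_apply,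
      hHs, smul_eq_mul]; ring
  have of_frame := fun {w : Module.Basis (Fin 3) ℝ 𝔤} {ε' lam' : Fin 3 → ℝ}
      (hw : IsDiagonalFrame B w ε' lam') (ha : w.repr Xm 0 ≠ 0) =>
    hw.classification_of_repr_ne_zero hBsymm hBnd hJpskew hJp2 hXp hXm hFXm hFs hxm hxp ha
  obtain ⟨i, hi⟩ : ∃ i, v.repr Xm i ≠ 0 := by
    by_contra! h
    have : Xm = 0 := v.repr.injective (Finsupp.ext fun i => by simp [h])
    simp [this] at hXm
  rcases fin_three_cases i with rfl | rfl | rfl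
  · exact of_frame hv hi
  · exact of_frame hv.rotate (by simpa using hi)
  · exact of_frame hv.rotate.rotate (by simpa using hi)
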